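/- arXiv:1809.06113 — 4 statements merged into one kernel-verified Lean document; each statement's English description precedes it below -/
import Mathlib

section
/- If a connected convex bipartite graph G has a Hamiltonian cycle, then G satisfies Property A. -/
open Finset SimpleGraph

/-- A convex bipartite graph with parts `X = Fin n` (with its natural order giving the
convex ordering) and `Y`: each `y : Y` has a consecutive neighborhood in `Fin n`. -/
structure ConvexBip (n : ℕ) (Y : Type*) where
  adj : Fin n → Y → Prop
  convex : ∀ (y : Y) (i₁ i₂ i₃ : Fin n),
    i₁ ≤ i₂ → i₂ ≤ i₃ → adj i₁ y → adj i₃ y → adj i₂ y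

namespace ConvexBip

variable {n : ℕ} {Y : Type*}

/-- The underlying bipartite simple graph on `Fin n ⊕ Y`. -/
def toGraph (G : ConvexBip n Y) : SimpleGraph (Fin n ⊕ Y) where
  Adj u v := (∃ i y, u = Sum.inl i ∧ v = Sum.inr y ∧ G.adj i y) ∨
             (∃ i y, u = Sum.inr y ∧ v = Sum.inl i ∧ G.adj i y)
  symm := by constructor; rintro u v (⟨i, y, rfl, rfl, h⟩ | ⟨i, y, rfl, rfl, h⟩)
             · exact Or.inr ⟨i, y, rfl, rfl, h⟩
             · exact Or.inl ⟨i, y, rfl, rfl, h⟩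
  loopless := by constructor; rintro u (⟨i, y, rfl, h, _⟩ | ⟨i, y, rfl, h, _⟩) <;> simp_all

/-- `N_G[X_{p..q}]`: the set of `y ∈ Y` whose whole neighborhood lies in `{x_p, …, x_q}`. -/
def NIn (G : ConvexBip n Y) (p q : Fin n) : Set Y :=
  {y | ∀ i, G.adj i y → p ≤ i ∧ i ≤ q}

/-- `N'_G[X_{p..q}]`: the set of `y ∈ Y` having at least two neighbors in `{x_p, …, x_q}`. -/
noncomputable def NIn' (G : ConvexBip n Y) (p q : Fin n) : Set Y :=
  {y | 2 ≤ {i : Fin n | G.adj i y ∧ p ≤ i ∧ i ≤ q}.ncard}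

/-- Degree of a vertex `y ∈ Y`. -/
noncomputable def degY (G : ConvexBip n Y) (y : Y) : ℕ := {i : Fin n | G.adj i y}.ncard

/-- Property A. -/
def PropertyA (G : ConvexBip n Y) : Prop :=
  (∀ p q : Fin n, p < q →
      ((p.val = 0 ∧ q.val < n - 1) ∨ (0 < p.val ∧ q.val = n - 1) ∨
        (0 < p.val ∧ q.val < n - 1)) →
      (G.NIn p q).ncard ≤ q.val - p.val) ∧
  (∀ (k : ℕ) (p q : Fin k → Fin n), 1 ≤ k → k ≤ n - 1 →
      (∀ i, p i < q i) → (∀ i i' : Fin k, i < i' → q i ≤ p i') →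
      (∑ i, ((q i).val - (p i).val)) ≤ (⋃ i, G.NIn' (p i) (q i)).ncard) ∧
  (∀ hn : 0 < n,
      (G.NIn ⟨0, hn⟩ ⟨n - 1, by omega⟩).ncard = n ∧
      (G.NIn' ⟨0, hn⟩ ⟨n - 1, by omega⟩).ncard = n)

/-- Property B. -/
def PropertyB (G : ConvexBip n Y) : Prop :=
  (∀ p q : Fin n, p < q →
      ((p.val = 0 ∧ q.val < n - 1) ∨ (0 < p.val ∧ q.val = n - 1) ∨
        (0 < p.val ∧ q.val < n - 1)) →
      (G.NIn p q).ncard ≤ q.val - p.val + 1) ∧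
  (∀ hn : 0 < n, (G.NIn ⟨0, hn⟩ ⟨n - 1, by omega⟩).ncard ≤ n + 1) ∧
  (∀ (k : ℕ) (p q : Fin k → Fin n), 1 ≤ k → k ≤ n - 1 →
      (∀ i, p i < q i) → (∀ i i' : Fin k, i < i' → q i ≤ p i') →
      (∑ i, ((q i).val - (p i).val)) ≤ (⋃ i, G.NIn' (p i) (q i)).ncard) ∧
  ({y : Y | G.degY y = 1}.ncard ≤ 2 ∧
    (2 ≤ n → ∀ (i : Fin n) (y y' : Y), y ≠ y' → G.degY y = 1 → G.degY y' = 1 →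
      G.adj i y → G.adj i y' → False))

/-- The interval `X_{p..q}` is maximal: `|N_G[X_{p..q}]| = q - p + 1` and no strictly
larger interval (within indices 2..n-1) has the analogous property. -/
def IsMaximalInt (G : ConvexBip n Y) (p q : Fin n) : Prop :=
  (G.NIn p q).ncard = q.val - p.val + 1 ∧
  ¬ ∃ p' q' : Fin n, 0 < p'.val ∧ q'.val < n - 1 ∧ p' ≤ p ∧ q ≤ q' ∧
      (p' < p ∨ q < q') ∧ (G.NIn p' q').ncard = q'.val - p'.val + 1

/-- Monotone convex bipartite graph. -/
def IsMonotone (G : ConvexBip n Y) : Prop :=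
  G.PropertyB ∧
  (¬ ∃ (y : Y) (k : Fin n), G.degY y = 1 ∧ G.adj k y ∧ 0 < k.val ∧ k.val < n - 1) ∧
  (¬ ∃ p q : Fin n, 0 < p.val ∧ p < q ∧ q.val < n - 1 ∧ G.IsMaximalInt p q)

/-- Non-monotone convex bipartite graph (satisfying Property B). -/
def IsNonMonotone (G : ConvexBip n Y) : Prop :=
  G.PropertyB ∧
  ((∃ (y : Y) (k : Fin n), G.degY y = 1 ∧ G.adj k y ∧ 0 < k.val ∧ k.val < n - 1) ∨
   (∃ p q : Fin n, 0 < p.val ∧ p < q ∧ q.val < n - 1 ∧ G.IsMaximalInt p q))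

/-- The interval graph obtained from `G`: keep all edges of `G` and make two distinct
`Y`-vertices adjacent whenever their neighborhoods in `X` intersect. -/
def intervalGraph (G : ConvexBip n Y) : SimpleGraph (Fin n ⊕ Y) where
  Adj u v := G.toGraph.Adj u v ∨
    (∃ y y', u = Sum.inr y ∧ v = Sum.inr y' ∧ y ≠ y' ∧ ∃ i, G.adj i y ∧ G.adj i y')
  symm := by
    constructor
    rintro u v (h | ⟨y, y', rfl, rfl, hne, i, h1, h2⟩)
    · exact Or.inl h.symm
    · exact Or.inr ⟨y', y, rfl, rfl, hne.symm, i, h2, h1⟩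
  loopless := by
    constructor
    rintro u (h | ⟨y, y', rfl, h, hne, _⟩)
    · exact G.toGraph.loopless.irrefl u h
    · exact hne (Sum.inr.inj h)

/-- `G` has a Hamiltonian cycle. -/
def HasHamCycle {V : Type*} [DecidableEq V] (H : SimpleGraph V) : Prop :=
  ∃ (v : V) (c : H.Walk v v), c.IsHamiltonianCycle

/-- `G` has a Hamiltonian path. -/
def HasHamPath {V : Type*} [DecidableEq V] (H : SimpleGraph V) : Prop :=
  ∃ (u v : V) (p : H.Walk u v), p.IsHamiltonian

/-- A maximal clique of a simple graph. -/
def IsMaxClique {V : Type*} (H : SimpleGraph V) (s : Set V) : Prop :=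
  H.IsClique s ∧ ∀ t : Set V, H.IsClique t → s ⊆ t → s = t

end ConvexBip

/-!
Follow the Hamiltonian cycle as a successor map `next`. Every `y ∈ Y` lies between two distinct
cycle neighbours `prevX y` and `nextX y` in `X`, and `next` pairs `X` bijectively with `Y`; this
gives (3). For (1), every vertex of `N_G[X_{p..q}]` is entered from `X_{p..q}`, so there are at most
`q - p + 1` of them, and equality would make `X_{p..q} ∪ N_G[X_{p..q}]` a proper subset closed
under `next`. For (2), colour `x_i` by the number of gaps `(t, t + 1)` of the given intervals below
`i`: the cycle has to leave each of the `Σ (q_i - p_i) + 1` colour classes, each time through a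
different `y` whose cycle neighbours enclose a gap, and by convexity such a `y` has two neighbours
in the interval of that gap.
-/

namespace SimpleGraph.Walk.IsHamiltonianCycle

variable {V : Type*} [DecidableEq V] {G : SimpleGraph V} {v : V} {c : G.Walk v v}

theorem mem_support_tail (hc : c.IsHamiltonianCycle) (w : V) : w ∈ c.support.tail := by
  rw [← support_tail_of_not_nil c hc.not_nil]
  exact hc.isHamiltonian_tail.mem_support w

theorem exists_dart_fst (hc : c.IsHamiltonianCycle) (w : V) : ∃ d ∈ c.darts, d.fst = w := by
  have hw : w ∈ c.darts.map (·.fst) := by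
    rw [map_fst_darts, ← c.tail_support_perm_dropLast_support.mem_iff]
    exact hc.mem_support_tail w
  simpa using hw

theorem exists_dart_snd (hc : c.IsHamiltonianCycle) (w : V) : ∃ d ∈ c.darts, d.snd = w := by
  have hw : w ∈ c.darts.map (·.snd) := by
    rw [map_snd_darts]
    exact hc.mem_support_tail w
  simpa using hw

theorem dart_eq_of_fst_eq (hc : c.IsHamiltonianCycle) {d d' : G.Dart} (hd : d ∈ c.darts)
    (hd' : d' ∈ c.darts) (h : d.fst = d'.fst) : d = d' :=
  List.inj_on_of_nodup_map (by rw [map_fst_darts]; exact hc.nodup_dropLast_support) hd hd' h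

theorem dart_eq_of_snd_eq (hc : c.IsHamiltonianCycle) {d d' : G.Dart} (hd : d ∈ c.darts)
    (hd' : d' ∈ c.darts) (h : d.snd = d'.snd) : d = d' :=
  List.inj_on_of_nodup_map (by rw [map_snd_darts]; exact hc.support_nodup) hd hd' h

noncomputable def next (hc : c.IsHamiltonianCycle) (w : V) : V :=
  (hc.exists_dart_fst w).choose.snd

noncomputable def prev (hc : c.IsHamiltonianCycle) (w : V) : V :=
  (hc.exists_dart_snd w).choose.fst

theorem next_fst (hc : c.IsHamiltonianCycle) {d : G.Dart} (hd : d ∈ c.darts) :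
    hc.next d.fst = d.snd := by
  obtain ⟨hmem, hfst⟩ := (hc.exists_dart_fst d.fst).choose_spec
  rw [next, hc.dart_eq_of_fst_eq hmem hd hfst]

theorem prev_snd (hc : c.IsHamiltonianCycle) {d : G.Dart} (hd : d ∈ c.darts) :
    hc.prev d.snd = d.fst := by
  obtain ⟨hmem, hsnd⟩ := (hc.exists_dart_snd d.snd).choose_spec
  rw [prev, hc.dart_eq_of_snd_eq hmem hd hsnd]

theorem adj_next (hc : c.IsHamiltonianCycle) (w : V) : G.Adj w (hc.next w) := by
  obtain ⟨d, hd, rfl⟩ := hc.exists_dart_fst w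
  exact hc.next_fst hd ▸ d.adj

theorem adj_prev (hc : c.IsHamiltonianCycle) (w : V) : G.Adj (hc.prev w) w := by
  obtain ⟨d, hd, rfl⟩ := hc.exists_dart_snd w
  exact hc.prev_snd hd ▸ d.adj

theorem prev_next (hc : c.IsHamiltonianCycle) (w : V) : hc.prev (hc.next w) = w := by
  obtain ⟨d, hd, rfl⟩ := hc.exists_dart_fst w
  rw [hc.next_fst hd, hc.prev_snd hd]

theorem next_prev (hc : c.IsHamiltonianCycle) (w : V) : hc.next (hc.prev w) = w := by
  obtain ⟨d, hd, rfl⟩ := hc.exists_dart_snd w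
  rw [hc.prev_snd hd, hc.next_fst hd]

theorem next_injective (hc : c.IsHamiltonianCycle) : Function.Injective hc.next :=
  Function.LeftInverse.injective hc.prev_next

-- The two darts at `w` would traverse the same edge, which a cycle never repeats.
theorem prev_ne_next (hc : c.IsHamiltonianCycle) (w : V) : hc.prev w ≠ hc.next w := by
  intro h
  obtain ⟨d₁, hd₁, rfl⟩ := hc.exists_dart_snd w
  obtain ⟨d₂, hd₂, hfst⟩ := hc.exists_dart_fst d₁.snd
  rw [hc.prev_snd hd₁, ← hfst, hc.next_fst hd₂] at h
  have hedge : d₁.edge = d₂.edge := by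
    rw [Dart.edge, Dart.edge, h, hfst, Sym2.eq_swap]
  have hd : d₁ = d₂ := List.inj_on_of_nodup_map hc.edges_nodup hd₁ hd₂ hedge
  exact d₁.fst_ne_snd (by rw [h, hd])

theorem exists_mem_next_notMem (hc : c.IsHamiltonianCycle) {S : Set V} {a b : V} (ha : a ∈ S)
    (hb : b ∉ S) :
    ∃ u ∈ S, hc.next u ∉ S := by
  let c' := c.rotate a (hc.mem_support a)
  obtain ⟨d, hd, hfst, hsnd⟩ :=
    (c'.takeUntil b ((hc.rotate _).mem_support b)).exists_boundary_dart S ha hb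
  have hdc : d ∈ c.darts :=
    (c.rotate_darts a _).mem_iff.1 (c'.darts_takeUntil_subset_darts _ hd)
  exact ⟨d.fst, hfst, hc.next_fst hdc ▸ hsnd⟩

-- Each colour class is left by some vertex of that colour.
theorem ncard_range_le_ncard_setOf_ne_next (hc : c.IsHamiltonianCycle) {C : Type*} (χ : V → C)
    (hχ : ∃ a b, χ a ≠ χ b) :
    (Set.range χ).ncard ≤ {u | χ u ≠ χ (hc.next u)}.ncard := by
  have := hc.finite
  obtain ⟨a, b, hab⟩ := hχ
  have hsub : Set.range χ ⊆ χ '' {u | χ u ≠ χ (hc.next u)} := by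
    rintro _ ⟨w, rfl⟩
    obtain ⟨b', hb'⟩ : ∃ b', χ b' ≠ χ w := by
      by_cases h : χ a = χ w
      · exact ⟨b, h ▸ hab.symm⟩
      · exact ⟨a, h⟩
    obtain ⟨u, hu, hnext⟩ := hc.exists_mem_next_notMem (S := {u | χ u = χ w}) rfl hb'
    exact ⟨u, fun h => hnext (h.symm.trans hu), hu⟩
  exact (Set.ncard_le_ncard hsub).trans Set.ncard_image_le

end SimpleGraph.Walk.IsHamiltonianCycle

theorem Finset.exists_mem_of_card_filter_lt_ne (s : Finset ℕ) {a b : ℕ} (hab : a ≤ b)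
    (h : #(s.filter (· < a)) ≠ #(s.filter (· < b))) : ∃ t ∈ s, a ≤ t ∧ t < b := by
  by_contra! H
  refine h (congrArg card (Finset.filter_congr fun t ht => ?_))
  exact ⟨fun hta => hta.trans_le hab,
    fun htb => by_contra fun hta => (H t ht (not_lt.1 hta)).not_gt htb⟩

namespace ConvexBip

open Sum

variable {n : ℕ} {Y : Type*} {G : ConvexBip n Y}

theorem toGraph_adj_inl {x : Fin n} {w : Fin n ⊕ Y} :
    G.toGraph.Adj (inl x) w ↔ ∃ y, w = inr y ∧ G.adj x y := by
  simp [toGraph]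

theorem toGraph_adj_inr {y : Y} {w : Fin n ⊕ Y} :
    G.toGraph.Adj (inr y) w ↔ ∃ x, w = inl x ∧ G.adj x y := by
  simp [toGraph]

theorem NIn_zero_last_eq_univ (hn : 0 < n) :
    G.NIn ⟨0, hn⟩ ⟨n - 1, by omega⟩ = Set.univ :=
  Set.eq_univ_of_forall fun _ i _ => by
    constructor <;> simp only [Fin.le_iff_val_le_val] <;> omega

theorem mem_NIn'_of_adj {a b p q : Fin n} {y : Y} (ha : G.adj a y) (hb : G.adj b y) {t : ℕ}
    (hat : a ≤ t) (htb : t < b) (hpt : p ≤ t) (htq : t < q) : y ∈ G.NIn' p q := by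
  have hmem : ∀ x : Fin n, a ≤ x → x ≤ b → p ≤ x → x ≤ q →
      x ∈ {i : Fin n | G.adj i y ∧ p ≤ i ∧ i ≤ q} :=
    fun x hax hxb hpx hxq => ⟨G.convex y a x b hax hxb ha hb, hpx, hxq⟩
  refine (Set.one_lt_ncard_iff (Set.toFinite _)).2
    ⟨⟨t, by omega⟩, ⟨t + 1, by omega⟩, ?_, ?_, by simp⟩ <;>
    apply hmem <;> simp only [Fin.le_iff_val_le_val] <;> omega

section HamiltonianCycle

variable [DecidableEq Y] {v : Fin n ⊕ Y} {c : G.toGraph.Walk v v}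

theorem exists_prev_inr (hc : c.IsHamiltonianCycle) (y : Y) :
    ∃ x, hc.prev (inr y) = inl x ∧ G.adj x y :=
  toGraph_adj_inr.1 (hc.adj_prev (inr y)).symm

theorem exists_next_inr (hc : c.IsHamiltonianCycle) (y : Y) :
    ∃ x, hc.next (inr y) = inl x ∧ G.adj x y :=
  toGraph_adj_inr.1 (hc.adj_next (inr y))

noncomputable def prevX (hc : c.IsHamiltonianCycle) (y : Y) : Fin n :=
  (exists_prev_inr hc y).choose

noncomputable def nextX (hc : c.IsHamiltonianCycle) (y : Y) : Fin n :=
  (exists_next_inr hc y).choose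

theorem prev_inr (hc : c.IsHamiltonianCycle) (y : Y) : hc.prev (inr y) = inl (prevX hc y) :=
  (exists_prev_inr hc y).choose_spec.1

theorem adj_prevX (hc : c.IsHamiltonianCycle) (y : Y) : G.adj (prevX hc y) y :=
  (exists_prev_inr hc y).choose_spec.2

theorem next_inr (hc : c.IsHamiltonianCycle) (y : Y) : hc.next (inr y) = inl (nextX hc y) :=
  (exists_next_inr hc y).choose_spec.1

theorem adj_nextX (hc : c.IsHamiltonianCycle) (y : Y) : G.adj (nextX hc y) y :=
  (exists_next_inr hc y).choose_spec.2

theorem prevX_ne_nextX (hc : c.IsHamiltonianCycle) (y : Y) : prevX hc y ≠ nextX hc y :=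
  fun h => hc.prev_ne_next (inr y) (by rw [prev_inr, next_inr, h])

theorem exists_next_inl (hc : c.IsHamiltonianCycle) (x : Fin n) :
    ∃ y, hc.next (inl x) = inr y ∧ prevX hc y = x := by
  obtain ⟨y, hy, -⟩ := toGraph_adj_inl.1 (hc.adj_next (inl x))
  exact ⟨y, hy, inl_injective (by rw [← prev_inr, ← hy, hc.prev_next])⟩

theorem nextX_bijective (hc : c.IsHamiltonianCycle) : Function.Bijective (nextX hc) := by
  refine ⟨fun y y' h => inr_injective (hc.next_injective (by rw [next_inr, next_inr, h])),
    fun x => ?_⟩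
  obtain ⟨y, hy, -⟩ := toGraph_adj_inl.1 (hc.adj_prev (inl x)).symm
  exact ⟨y, inl_injective (by rw [← next_inr, ← hy, hc.next_prev])⟩

theorem natCard_eq_of_isHamiltonianCycle (hc : c.IsHamiltonianCycle) : Nat.card Y = n := by
  rw [Nat.card_eq_of_bijective _ (nextX_bijective hc), Nat.card_eq_fintype_card, Fintype.card_fin]

theorem finite_of_isHamiltonianCycle (hc : c.IsHamiltonianCycle) : Finite Y :=
  Finite.of_injective _ (nextX_bijective hc).1

theorem NIn'_zero_last_eq_univ (hc : c.IsHamiltonianCycle) (hn : 0 < n) :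
    G.NIn' ⟨0, hn⟩ ⟨n - 1, by omega⟩ = Set.univ := by
  refine Set.eq_univ_of_forall fun y => (Set.one_lt_ncard_iff (Set.toFinite _)).2
    ⟨prevX hc y, nextX hc y, ⟨adj_prevX hc y, ?_⟩, ⟨adj_nextX hc y, ?_⟩,
      prevX_ne_nextX hc y⟩ <;>
    constructor <;> simp only [Fin.le_iff_val_le_val] <;> omega

theorem ncard_NIn_le (hc : c.IsHamiltonianCycle) {p q j : Fin n} (hpq : p ≤ q)
    (hj : j < p ∨ q < j) : (G.NIn p q).ncard ≤ q - p := by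
  have := finite_of_isHamiltonianCycle hc
  set A : Set (Fin n ⊕ Y) := inl '' Set.Icc p q
  set B : Set (Fin n ⊕ Y) := inr '' G.NIn p q
  have hBA : B ⊆ hc.next '' A := by
    rintro _ ⟨y, hy, rfl⟩
    exact ⟨inl (prevX hc y), ⟨_, hy _ (adj_prevX hc y), rfl⟩,
      by rw [← prev_inr, hc.next_prev]⟩
  have hA : A.ncard = q - p + 1 := by
    rw [Set.ncard_image_of_injective _ inl_injective, ← Finset.coe_Icc, Set.ncard_coe_finset,
      Fin.card_Icc]
    omega
  have hB : B.ncard = (G.NIn p q).ncard := Set.ncard_image_of_injective _ inr_injective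
  by_contra! hlt
  have hBeq : B = hc.next '' A :=
    Set.eq_of_subset_of_ncard_le hBA ((Set.ncard_image_le (Set.toFinite A)).trans (by omega))
  have hp : inl p ∈ A ∪ B := Or.inl ⟨p, ⟨le_rfl, hpq⟩, rfl⟩
  have hj' : inl j ∉ A ∪ B := by
    rintro (⟨x, ⟨hpx, hxq⟩, hx⟩ | ⟨_, _, hy⟩)
    · cases inl_injective hx
      rcases hj with h | h
      exacts [h.not_ge hpx, h.not_ge hxq]
    · cases hy
  obtain ⟨u, hu, hnext⟩ := hc.exists_mem_next_notMem hp hj'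
  rcases hu with hu | ⟨y, hy, rfl⟩
  · exact hnext (Or.inr (hBeq ▸ Set.mem_image_of_mem _ hu))
  · exact hnext (Or.inl ⟨nextX hc y, hy _ (adj_nextX hc y), (next_inr hc y).symm⟩)

-- `t ∈ T` stands for the gap between `x_t` and `x_{t+1}`; `y` is straddling when some gap of `T`
-- separates its two cycle neighbours.
noncomputable def straddling (hc : c.IsHamiltonianCycle) (T : Finset ℕ) : Set Y :=
  {y | #(T.filter (· < (prevX hc y : ℕ))) ≠ #(T.filter (· < (nextX hc y : ℕ)))}

-- Colour `x` by the number of gaps of `T` below it, and `y` by the colour of its predecessor: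
-- the cycle has to leave each of the `#T + 1` colour classes, and can only do so at a straddling
-- `y`.
theorem card_le_ncard_straddling (hc : c.IsHamiltonianCycle) (T : Finset ℕ)
    (hT : ∀ t ∈ T, t + 1 < n) :
    #T ≤ (straddling hc T).ncard := by
  have := finite_of_isHamiltonianCycle hc
  rcases T.eq_empty_or_nonempty with rfl | ⟨t₀, ht₀⟩
  · simp
  set β : ℕ → ℕ := fun x => #(T.filter (· < x))
  set χ : Fin n ⊕ Y → ℕ := Sum.elim (fun x => β x) (fun y => β (prevX hc y))
  have hβ : StrictMonoOn (fun t => β (t + 1)) T := fun t ht t' ht' htt' =>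
    Finset.card_lt_card <| Finset.ssubset_iff_of_subset
      (Finset.monotone_filter_right _ fun s hs => by omega) |>.2
      ⟨t', by simpa using ht', by simp [htt']⟩
  have hrange : #T ≤ (Set.range χ).ncard := by
    rw [← Set.ncard_coe_finset, ← hβ.injOn.ncard_image]
    refine Set.ncard_le_ncard ?_ (Set.toFinite _)
    rintro _ ⟨t, ht, rfl⟩
    exact ⟨inl ⟨t + 1, hT t ht⟩, rfl⟩
  have hχ : ∃ a b, χ a ≠ χ b := by
    refine ⟨inl ⟨0, by have := hT t₀ ht₀; omega⟩, inl ⟨t₀ + 1, hT t₀ ht₀⟩, ?_⟩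
    simp only [χ, β, Sum.elim_inl, not_lt_zero, Finset.filter_false, Finset.card_empty]
    exact (Finset.card_pos.2 ⟨t₀, by simp [ht₀]⟩).ne
  have hchange : {u | χ u ≠ χ (hc.next u)} ⊆
      inr '' straddling hc T := by
    rintro (x | y) hu
    · obtain ⟨y, hy, hprev⟩ := exists_next_inl hc x
      simp [χ, hy, hprev] at hu
    · exact ⟨y, by simpa [straddling, χ, next_inr] using hu, rfl⟩
  calc #T ≤ (Set.range χ).ncard := hrange
    _ ≤ {u | χ u ≠ χ (hc.next u)}.ncard := hc.ncard_range_le_ncard_setOf_ne_next χ hχ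
    _ ≤ _ := Set.ncard_le_ncard hchange (Set.toFinite _)
    _ = _ := Set.ncard_image_of_injective _ inr_injective

theorem sum_sub_le_ncard_iUnion_NIn' (hc : c.IsHamiltonianCycle) {ι : Type*} [Fintype ι]
    [LinearOrder ι] {p q : ι → Fin n} (hsep : ∀ i i', i < i' → q i ≤ p i') :
    ∑ i, ((q i : ℕ) - p i) ≤ (⋃ i, G.NIn' (p i) (q i)).ncard := by
  have := finite_of_isHamiltonianCycle hc
  set T : Finset ℕ := univ.biUnion fun i => Finset.Ico (p i : ℕ) (q i)
  have hdisj :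
      (↑(univ : Finset ι) : Set ι).PairwiseDisjoint fun i => Finset.Ico (p i : ℕ) (q i) := by
    intro i _ i' _ hne
    have := hsep i i'
    have := hsep i' i
    rw [Function.onFun, Finset.disjoint_left]
    intro t ht ht'
    simp only [Finset.mem_Ico, Fin.le_iff_val_le_val] at *
    rcases hne.lt_or_gt with h | h <;> grind
  have hcard : #T = ∑ i, ((q i : ℕ) - p i) := by
    rw [Finset.card_biUnion hdisj]
    simp
  have hT : ∀ t ∈ T, t + 1 < n := by
    intro t ht
    obtain ⟨i, -, hti⟩ := Finset.mem_biUnion.1 ht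
    have := (q i).isLt
    grind
  have hsub : straddling hc T ⊆ ⋃ i, G.NIn' (p i) (q i) := by
    intro y hy
    have key : ∀ a b : Fin n, G.adj a y → G.adj b y → a ≤ b →
        #(T.filter (· < (a : ℕ))) ≠ #(T.filter (· < (b : ℕ))) →
        y ∈ ⋃ i, G.NIn' (p i) (q i) := by
      intro a b ha hb hab hne
      obtain ⟨t, ht, hat, htb⟩ := T.exists_mem_of_card_filter_lt_ne hab hne
      obtain ⟨i, -, hti⟩ := Finset.mem_biUnion.1 ht
      rw [Finset.mem_Ico] at hti
      exact Set.mem_iUnion.2 ⟨i, mem_NIn'_of_adj ha hb hat htb hti.1 hti.2⟩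
    rcases le_total (prevX hc y) (nextX hc y) with h | h
    · exact key _ _ (adj_prevX hc y) (adj_nextX hc y) h hy
    · exact key _ _ (adj_nextX hc y) (adj_prevX hc y) h (Ne.symm hy)
  rw [← hcard]
  exact (card_le_ncard_straddling hc T hT).trans (Set.ncard_le_ncard hsub)

end HamiltonianCycle

end ConvexBip

theorem stmt_3_general {n : ℕ} {Y : Type*} [DecidableEq Y]
    (G : ConvexBip n Y)
    (hham : ConvexBip.HasHamCycle G.toGraph) :
    G.PropertyA := by
  obtain ⟨v, c, hc⟩ := hham
  refine ⟨fun p q hpq hout => ?_,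
    fun _ _ _ _ _ _ hsep => ConvexBip.sum_sub_le_ncard_iUnion_NIn' hc hsep,
    fun hn => ⟨?_, ?_⟩⟩
  · obtain ⟨j, hj⟩ : ∃ j : Fin n, j < p ∨ q < j := by
      rcases hout with ⟨-, hq⟩ | ⟨hp, -⟩ | ⟨hp, -⟩
      · exact ⟨⟨n - 1, by omega⟩, Or.inr (Fin.lt_def.2 hq)⟩
      all_goals exact ⟨⟨0, by omega⟩, Or.inl (Fin.lt_def.2 hp)⟩
    exact ConvexBip.ncard_NIn_le hc hpq.le hj
  · rw [ConvexBip.NIn_zero_last_eq_univ, Set.ncard_univ,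
      ConvexBip.natCard_eq_of_isHamiltonianCycle hc]
  · rw [ConvexBip.NIn'_zero_last_eq_univ hc, Set.ncard_univ,
      ConvexBip.natCard_eq_of_isHamiltonianCycle hc]

/-- if a connected convex bipartite graph has a Hamiltonian cycle then it
satisfies Property A. -/
theorem stmt_3 {n : ℕ} {Y : Type*} [Fintype Y] [DecidableEq Y]
    (G : ConvexBip n Y) (hconn : G.toGraph.Connected)
    (hham : ConvexBip.HasHamCycle G.toGraph) :
    G.PropertyA :=
  stmt_3_general G hham
end

section
/- If a connected convex bipartite graph G has a Hamiltonian path, then G satisfies Property B. -/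
open Finset SimpleGraph

/-!
Follow the Hamiltonian path. Its vertices alternate between `X` and `Y`, and each `y` on it other
than the first vertex is preceded by one of its neighbours. This injects `N_G[X_{p..q}]` into
`{x_p, …, x_q}` up to one exceptional vertex, which disappears when the path is cut at a vertex
`x_r` outside the interval.

For the lower bound let `U = ⋃ N'_G[X_{p_i..q_i}]`. Removing `U` cuts the path into at most
`|U| + 1` pieces. A piece never crosses a gap between `x_c` and `x_{c+1}` with `p_i ≤ c < q_i`,
since a vertex of `Y` adjacent to both sides is adjacent to `x_c` and `x_{c+1}` by convexity.
The `Σ (q_i - p_i)` gaps split `X` into `Σ (q_i - p_i) + 1` nonempty blocks, each met by some piece.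

A pendant vertex of `Y` has a single neighbour on the path, so it is an end of the path. If two
pendant vertices share their neighbour `x_i`, the path is `y x_i y'`, which misses the other
vertices of `X`.
-/

namespace List

variable {α β : Type*} {R : α → α → Prop}

theorem countP_cons_le_countP_add_of_isChain {p q : α → Bool}
    (hpq : ∀ a b, R a b → p b → q a) :
    ∀ {a : α} {l : List α}, (a :: l).IsChain R →
      (a :: l).countP p ≤ (a :: l).countP q + if p a then 1 else 0
  | a, [], _ => by by_cases h : p a <;> simp [h]
  | a, b :: l, h => by
    rw [isChain_cons_cons] at h
    have ih := countP_cons_le_countP_add_of_isChain hpq h.2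
    have hba : (if p b then 1 else 0) ≤ if q a then 1 else 0 := by
      by_cases hb : p b <;> simp [hb, hpq a b h.1]
    rw [countP_cons (l := b :: l), countP_cons (l := b :: l)]
    omega

theorem countP_le_countP_add_one_of_isChain {p q : α → Bool}
    (hpq : ∀ a b, R a b → p b → q a) {l : List α} (hl : l.IsChain R) :
    l.countP p ≤ l.countP q + 1 := by
  cases l with
  | nil => simp
  | cons a l =>
    have := countP_cons_le_countP_add_of_isChain hpq hl
    split_ifs at this <;> omega

theorem countP_le_countP_of_isChain_of_mem (hR : ∀ a b, R a b → R b a) {p q : α → Bool}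
    (hpq : ∀ a b, R a b → p b → q a) {l : List α} (hl : l.IsChain R) {r : α} (hr : r ∈ l)
    (hpr : p r = false) (hqr : q r = false) : l.countP p ≤ l.countP q := by
  obtain ⟨l₁, l₂, rfl⟩ := append_of_mem hr
  have h₂ := countP_cons_le_countP_add_of_isChain hpq (hl.suffix ⟨l₁, rfl⟩)
  have hpre : (l₁ ++ [r]).IsChain R := hl.prefix ⟨l₂, by simp⟩
  have hrev : (l₁ ++ [r]).reverse.IsChain R := isChain_reverse.2 (hpre.imp fun a b h => hR a b h)
  have h₁ := countP_cons_le_countP_add_of_isChain hpq (by simpa using hrev)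
  simp only [countP_cons, countP_reverse, hpr, hqr, Bool.false_eq_true, if_false] at h₁ h₂
  simp only [countP_append, countP_cons, hpr, hqr, Bool.false_eq_true, if_false]
  omega

variable [DecidableEq β]

theorem card_toFinset_map_filter_cons_le_of_isChain {Z : α → Bool} {f : α → β}
    (hf : ∀ a b, R a b → Z a = false → Z b = false → f a = f b) :
    ∀ {a : α} {l : List α}, (a :: l).IsChain R →
      (((a :: l).filter (! Z ·)).map f).toFinset.card ≤
        (a :: l).countP Z + if Z a then 0 else 1
  | a, [], _ => by cases h : Z a <;> simp [h]
  | a, b :: l, h => by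
    rw [isChain_cons_cons] at h
    have ih := card_toFinset_map_filter_cons_le_of_isChain hf h.2
    cases ha : Z a
    · cases hb : Z b
      · simp only [filter_cons, countP_cons (l := b :: l), ha, hb] at ih ⊢
        simpa [hf a b h.1 ha hb] using ih
      · have := Finset.card_insert_le (f a) (((b :: l).filter (! Z ·)).map f).toFinset
        simp only [filter_cons (x := a), countP_cons (l := b :: l), ha, hb, Bool.not_false,
          Bool.false_eq_true, map_cons, toFinset_cons, ↓reduceIte, add_zero] at ih this ⊢
        omega
    · simp only [filter_cons (x := a), countP_cons (l := b :: l), ha, Bool.not_true,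
        Bool.false_eq_true, ↓reduceIte, add_zero] at ih ⊢
      split_ifs at ih <;> omega

theorem card_toFinset_map_filter_le_of_isChain {Z : α → Bool} {f : α → β}
    (hf : ∀ a b, R a b → Z a = false → Z b = false → f a = f b) {l : List α}
    (hl : l.IsChain R) :
    ((l.filter (! Z ·)).map f).toFinset.card ≤ l.countP Z + 1 := by
  cases l with
  | nil => simp
  | cons a l =>
    have := card_toFinset_map_filter_cons_le_of_isChain hf hl
    split_ifs at this <;> omega

theorem Nodup.countP_mem_eq_ncard {l : List α} (hl : l.Nodup) (hmem : ∀ a, a ∈ l) (A : Set α)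
    [DecidablePred (· ∈ A)] : l.countP (· ∈ A) = A.ncard := by
  classical
  have hA : A = ↑(l.filter (· ∈ A)).toFinset := by ext a; simp [hmem]
  rw [countP_eq_length_filter, ← toFinset_card_of_nodup (hl.filter _), ← Set.ncard_coe_finset,
    ← hA]

end List

namespace Finset

theorem card_add_one_le_ncard_range_filter_lt {n : ℕ} (hn : 0 < n) (C : Finset ℕ)
    (hC : ∀ c ∈ C, c + 1 < n) :
    C.card + 1 ≤ (Set.range fun i : Fin n => C.filter (· < (i : ℕ))).ncard := by
  classical
  set T := insert ∅ (C.image fun c => C.filter (· ≤ c))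
  have hT : (T : Set (Finset ℕ)) ⊆ Set.range fun i : Fin n => C.filter (· < (i : ℕ)) := by
    simp only [T, coe_insert, coe_image, Set.insert_subset_iff, Set.image_subset_iff]
    refine ⟨⟨⟨0, hn⟩, by simp⟩, fun c hc => ⟨⟨c + 1, hC c hc⟩, ?_⟩⟩
    simp
  have hcard : T.card = C.card + 1 := by
    rw [card_insert_of_notMem, card_image_of_injOn]
    · intro c hc c' hc' h
      have h₁ := (Finset.ext_iff.1 h c).1 (by simpa using hc)
      have h₂ := (Finset.ext_iff.1 h c').2 (by simpa using hc')
      simp only [mem_filter] at h₁ h₂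
      omega
    · simp only [mem_image, not_exists, not_and]
      intro c hc h
      simpa [hc] using (Finset.ext_iff.1 h c).1
  rw [← hcard, ← Set.ncard_coe_finset]
  exact Set.ncard_le_ncard hT (Set.finite_range _)

theorem card_biUnion_Ico {ι : Type*} [Fintype ι] [LinearOrder ι] (a b : ι → ℕ)
    (hab : ∀ i j, i < j → b i ≤ a j) :
    (univ.biUnion fun i => Ico (a i) (b i)).card = ∑ i, (b i - a i) := by
  rw [card_biUnion]
  · simp
  · intro i _ j _ hij
    rw [Function.onFun, disjoint_left]
    intro c hci hcj
    simp only [mem_Ico] at hci hcj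
    rcases hij.lt_or_gt with h | h
    · have := hab i j h; omega
    · have := hab j i h; omega

end Finset

namespace SimpleGraph.Walk

variable {V β : Type*} [DecidableEq V] {H : SimpleGraph V} {u v : V} {p : H.Walk u v}

theorem IsHamiltonian.eq_or_eq_of_neighborSet_subsingleton
    (hp : p.IsHamiltonian) {w : V} (hw : (H.neighborSet w).Subsingleton) : w = u ∨ w = v := by
  obtain ⟨i, rfl, hi⟩ := mem_support_iff_exists_getVert.1 (hp.mem_support w)
  by_contra! h
  have hi0 : i ≠ 0 := by rintro rfl; exact h.1 p.getVert_zero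
  have hil : i < p.length := lt_of_le_of_ne hi (by rintro rfl; exact h.2 p.getVert_length)
  have hprev : H.Adj (p.getVert i) (p.getVert (i - 1)) :=
    (Nat.sub_add_cancel (Nat.one_le_iff_ne_zero.2 hi0) ▸ p.adj_getVert_succ (by omega)).symm
  have := hp.isPath.getVert_injOn (by simp; omega) (by simp; omega)
    (hw hprev (p.adj_getVert_succ hil))
  omega

theorem IsHamiltonian.eq_or_eq_or_eq_of_neighborSet_subset (hp : p.IsHamiltonian) (huv : u ≠ v)
    {w : V} (hu : H.neighborSet u ⊆ {w}) (hv : H.neighborSet v ⊆ {w}) (x : V) :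
    x = u ∨ x = w ∨ x = v := by
  have hnil : ¬ p.Nil := fun h => huv h.eq
  have hsnd : p.snd = w := hu (p.adj_snd hnil)
  have hpen : p.penultimate = w := hv (p.adj_penultimate hnil).symm
  have hlen : p.length = 2 := by
    have := p.not_nil_iff_lt_length.1 hnil
    have := hp.isPath.getVert_injOn (by simp; omega) (by simp) (hsnd.trans hpen.symm)
    omega
  obtain ⟨i, rfl, hi⟩ := mem_support_iff_exists_getVert.1 (hp.mem_support x)
  rw [hlen] at hi
  interval_cases i
  · exact .inl p.getVert_zero
  · exact .inr (.inl hsnd)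
  · exact .inr (.inr (hlen ▸ p.getVert_length))

theorem IsHamiltonian.ncard_le_ncard_add_one (hp : p.IsHamiltonian) {A B : Set V}
    (hAB : ∀ a ∈ A, ∀ b, H.Adj a b → b ∈ B) : A.ncard ≤ B.ncard + 1 := by
  classical
  rw [← hp.isPath.support_nodup.countP_mem_eq_ncard hp.mem_support,
    ← hp.isPath.support_nodup.countP_mem_eq_ncard hp.mem_support]
  exact List.countP_le_countP_add_one_of_isChain
    (fun a b h hb => by simpa using hAB b (by simpa using hb) a h.symm) p.isChain_adj_support

theorem IsHamiltonian.ncard_le_ncard (hp : p.IsHamiltonian) {A B : Set V}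
    (hAB : ∀ a ∈ A, ∀ b, H.Adj a b → b ∈ B) {r : V} (hrA : r ∉ A) (hrB : r ∉ B) :
    A.ncard ≤ B.ncard := by
  classical
  rw [← hp.isPath.support_nodup.countP_mem_eq_ncard hp.mem_support,
    ← hp.isPath.support_nodup.countP_mem_eq_ncard hp.mem_support]
  exact List.countP_le_countP_of_isChain_of_mem (fun a b h => h.symm)
    (fun a b h hb => by simpa using hAB b (by simpa using hb) a h.symm) p.isChain_adj_support
    (hp.mem_support r) (by simpa using hrA) (by simpa using hrB)

theorem IsHamiltonian.ncard_image_compl_le (hp : p.IsHamiltonian) {Z : Set V} {f : V → β}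
    (hf : ∀ a b, H.Adj a b → a ∉ Z → b ∉ Z → f a = f b) : (f '' Zᶜ).ncard ≤ Z.ncard + 1 := by
  classical
  have himage : f '' Zᶜ = ↑((p.support.filter (fun x => ! decide (x ∈ Z))).map f).toFinset := by
    ext; simp [hp.mem_support]
  rw [himage, Set.ncard_coe_finset, ← hp.isPath.support_nodup.countP_mem_eq_ncard hp.mem_support]
  exact List.card_toFinset_map_filter_le_of_isChain
    (fun a b h ha hb => hf a b h (by simpa using ha) (by simpa using hb)) p.isChain_adj_support

end SimpleGraph.Walk

namespace ConvexBip

variable {n : ℕ} {Y : Type*} (G : ConvexBip n Y)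

@[simp]
theorem toGraph_adj_inl_inr {i : Fin n} {y : Y} : G.toGraph.Adj (.inl i) (.inr y) ↔ G.adj i y := by
  simp [toGraph]

@[simp]
theorem toGraph_adj_inr_inl {i : Fin n} {y : Y} : G.toGraph.Adj (.inr y) (.inl i) ↔ G.adj i y := by
  simp [toGraph]

@[simp]
theorem not_toGraph_adj_inl_inl {i j : Fin n} : ¬ G.toGraph.Adj (.inl i) (.inl j) := by
  simp [toGraph]

@[simp]
theorem not_toGraph_adj_inr_inr {y y' : Y} : ¬ G.toGraph.Adj (.inr y) (.inr y') := by
  simp [toGraph]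

theorem neighborSet_inr (y : Y) :
    G.toGraph.neighborSet (.inr y) = Sum.inl '' {i | G.adj i y} := by
  ext (i | y') <;> simp

theorem neighborSet_inr_eq_singleton {i : Fin n} {y : Y} (hy : G.degY y = 1) (hi : G.adj i y) :
    G.toGraph.neighborSet (.inr y) = {.inl i} := by
  obtain ⟨i₀, hi₀⟩ := Set.ncard_eq_one.1 hy
  have : i = i₀ := by simpa [hi₀] using (Set.ext_iff.1 hi₀ i).1 hi
  rw [neighborSet_inr, hi₀, this, Set.image_singleton]

theorem neighborSet_inr_subsingleton {y : Y} (hy : G.degY y = 1) :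
    (G.toGraph.neighborSet (.inr y)).Subsingleton := by
  obtain ⟨i₀, hi₀⟩ := Set.ncard_eq_one.1 hy
  rw [G.neighborSet_inr_eq_singleton hy (show i₀ ∈ {i | G.adj i y} from hi₀ ▸ rfl)]
  exact Set.subsingleton_singleton

theorem mem_image_inl_of_toGraph_adj {S : Set Y} {I : Set (Fin n)}
    (hSI : ∀ y ∈ S, ∀ i, G.adj i y → i ∈ I) :
    ∀ a ∈ Sum.inr '' S, ∀ b, G.toGraph.Adj a b → b ∈ Sum.inl '' I := by
  rintro _ ⟨y, hy, rfl⟩ (i | y') h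
  · exact ⟨i, hSI y hy i (by simpa using h), rfl⟩
  · simp at h

theorem mem_NIn'_of_adj_of_adj {y : Y} {p q a b : Fin n} {c : ℕ} (hpc : p ≤ c) (hcq : c < q)
    (ha : G.adj a y) (hb : G.adj b y) (hac : a ≤ c) (hcb : c < b) : y ∈ G.NIn' p q := by
  have hc : c + 1 < n := by omega
  have hadj : ∀ j : Fin n, a ≤ j → j ≤ b → G.adj j y := fun j haj hjb =>
    G.convex y a j b haj hjb ha hb
  have hpair : ({⟨c, by omega⟩, ⟨c + 1, hc⟩} : Set (Fin n)) ⊆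
      {i | G.adj i y ∧ p ≤ i ∧ i ≤ q} := by
    simp only [Set.insert_subset_iff, Set.singleton_subset_iff, Set.mem_ofPred_eq, Fin.le_def]
    exact ⟨⟨hadj _ (by simpa [Fin.le_def]) (by simp [Fin.le_def]; omega), hpc, by omega⟩,
      hadj _ (by simp [Fin.le_def]; omega) (by simp [Fin.le_def]; omega), by omega, by omega⟩
  have := Set.ncard_le_ncard hpair (Set.toFinite _)
  rwa [Set.ncard_pair (by simp [Fin.ext_iff])] at this

section HamiltonianPath

variable [DecidableEq Y] {u v : Fin n ⊕ Y} {P : G.toGraph.Walk u v}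

theorem ncard_le_ncard_of_isHamiltonian (hP : P.IsHamiltonian) {S : Set Y} {I : Set (Fin n)}
    (hSI : ∀ y ∈ S, ∀ i, G.adj i y → i ∈ I) {r : Fin n} (hr : r ∉ I) : S.ncard ≤ I.ncard := by
  simpa [Set.ncard_image_of_injective _ Sum.inl_injective,
    Set.ncard_image_of_injective _ Sum.inr_injective] using
    hP.ncard_le_ncard (G.mem_image_inl_of_toGraph_adj hSI) (r := .inl r) (by simp)
      (by simpa using hr)

theorem ncard_le_add_one_of_isHamiltonian (hP : P.IsHamiltonian) (S : Set Y) :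
    S.ncard ≤ n + 1 := by
  simpa [Set.ncard_range_of_injective Sum.inl_injective,
    Set.ncard_image_of_injective _ Sum.inr_injective] using
    hP.ncard_le_ncard_add_one (G.mem_image_inl_of_toGraph_adj (S := S) (I := Set.univ) (by simp))

theorem card_le_ncard_of_isHamiltonian (hP : P.IsHamiltonian) (hn : 0 < n) {C : Finset ℕ}
    (hC : ∀ c ∈ C, c + 1 < n) {U : Set Y}
    (hU : ∀ y (a b : Fin n), ∀ c ∈ C, G.adj a y → G.adj b y → a ≤ c → c < b → y ∈ U) :
    C.card ≤ U.ncard := by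
  classical
  have := hP.finite
  let f : Fin n ⊕ Y → Finset ℕ :=
    Sum.elim (fun i => C.filter (· < (i : ℕ))) fun y => C.filter fun c => ∀ i, G.adj i y → c < i
  have hf : ∀ i y, G.adj i y → y ∉ U → f (.inl i) = f (.inr y) := by
    intro i y hi hy
    ext c
    simp only [f, Sum.elim_inl, Sum.elim_inr, Finset.mem_filter, and_congr_right_iff]
    refine fun hc => ⟨fun hci j hj => ?_, fun h => h i hi⟩
    by_contra! hjc
    exact hy (hU y j i c hc hj hi hjc hci)
  have hrange : (Set.range fun i : Fin n => C.filter (· < (i : ℕ))) ⊆ f '' (Sum.inr '' U)ᶜ := by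
    rintro _ ⟨i, rfl⟩
    exact ⟨.inl i, by simp, rfl⟩
  have hpieces : (f '' (Sum.inr '' U)ᶜ).ncard ≤ (Sum.inr '' U : Set (Fin n ⊕ Y)).ncard + 1 := by
    refine hP.ncard_image_compl_le ?_
    rintro (i | y) (j | y') h ha hb <;> simp only [toGraph_adj_inl_inr, toGraph_adj_inr_inl,
      not_toGraph_adj_inl_inl, not_toGraph_adj_inr_inr] at h
    · exact hf i y' h (by simpa using hb)
    · exact (hf j y h (by simpa using ha)).symm
  have := (C.card_add_one_le_ncard_range_filter_lt hn hC).trans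
    ((Set.ncard_le_ncard hrange (Set.toFinite _)).trans hpieces)
  rw [Set.ncard_image_of_injective _ Sum.inr_injective] at this
  omega

theorem ncard_setOf_degY_eq_one_le_two (hP : P.IsHamiltonian) :
    {y | G.degY y = 1}.ncard ≤ 2 := by
  have hends : Set.MapsTo Sum.inr {y | G.degY y = 1} {u, v} := fun y hy =>
    hP.eq_or_eq_of_neighborSet_subsingleton (G.neighborSet_inr_subsingleton hy)
  calc {y | G.degY y = 1}.ncard ≤ ({u, v} : Set (Fin n ⊕ Y)).ncard :=
        Set.ncard_le_ncard_of_injOn _ hends Sum.inr_injective.injOn (Set.toFinite _)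
    _ ≤ 2 := (Set.ncard_insert_le _ _).trans (by simp)

theorem eq_of_degY_eq_one_of_adj (hP : P.IsHamiltonian) (hn : 2 ≤ n) {i : Fin n} {y y' : Y}
    (hy : G.degY y = 1) (hy' : G.degY y' = 1) (hi : G.adj i y) (hi' : G.adj i y') : y = y' := by
  by_contra hne
  have : Nontrivial (Fin n) := Fin.nontrivial_iff_two_le.2 hn
  obtain ⟨j, hj⟩ := exists_ne i
  have hN := G.neighborSet_inr_eq_singleton hy hi
  have hN' := G.neighborSet_inr_eq_singleton hy' hi'
  have hpath : ∀ a b : Y, a ≠ b → G.toGraph.neighborSet (.inr a) = {.inl i} →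
      G.toGraph.neighborSet (.inr b) = {.inl i} → .inr a = u → .inr b = v → False := by
    rintro a b hab ha hb rfl rfl
    simpa [hj] using hP.eq_or_eq_or_eq_of_neighborSet_subset (by simpa using hab) ha.subset
      hb.subset (.inl j)
  rcases hP.eq_or_eq_of_neighborSet_subsingleton (G.neighborSet_inr_subsingleton hy) with h | h
    <;> rcases hP.eq_or_eq_of_neighborSet_subsingleton (G.neighborSet_inr_subsingleton hy')
      with h' | h'
  · exact hne (Sum.inr_injective (h.trans h'.symm))
  · exact hpath y y' hne hN hN' h h'
  · exact hpath y' y (Ne.symm hne) hN' hN h' h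
  · exact hne (Sum.inr_injective (h.trans h'.symm))

end HamiltonianPath

end ConvexBip

theorem stmt_6_general {n : ℕ} {Y : Type*} [DecidableEq Y]
    (G : ConvexBip n Y) (hham : ConvexBip.HasHamPath G.toGraph) :
    G.PropertyB := by
  obtain ⟨u, v, P, hP⟩ := hham
  refine ⟨fun p q _ hpq => ?_, fun _ => G.ncard_le_add_one_of_isHamiltonian hP _,
    fun k p q hk _ _ hord => ?_, G.ncard_setOf_degY_eq_one_le_two hP,
    fun hn i y y' hne hy hy' hi hi' => hne (G.eq_of_degY_eq_one_of_adj hP hn hy hy' hi hi')⟩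
  · obtain ⟨r, hr⟩ : ∃ r : Fin n, r ∉ Set.Icc p q := by
      simp only [Set.mem_Icc, not_and_or, not_le, Fin.lt_def]
      rcases hpq with ⟨-, hq⟩ | ⟨hp, -⟩ | ⟨hp, -⟩
      · exact ⟨⟨n - 1, by omega⟩, .inr (by simpa)⟩
      all_goals exact ⟨⟨0, by omega⟩, .inl hp⟩
    have := G.ncard_le_ncard_of_isHamiltonian hP (S := G.NIn p q) (I := Set.Icc p q)
      (fun y hy i hi => hy i hi) hr
    rw [Set.ncard_eq_toFinset_card' (Set.Icc p q), Set.toFinset_Icc, Fin.card_Icc] at this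
    omega
  · rw [← card_biUnion_Ico (fun i => (p i : ℕ)) (fun i => q i) hord]
    have hgap : ∀ c ∈ univ.biUnion fun i => Ico (p i : ℕ) (q i), ∃ i, p i ≤ c ∧ c < q i :=
      fun c hc => by simpa only [mem_biUnion, mem_univ, true_and, mem_Ico] using hc
    refine G.card_le_ncard_of_isHamiltonian hP (p ⟨0, hk⟩).pos (fun c hc => ?_)
      fun y a b c hc ha hb hac hcb => ?_
    · obtain ⟨i, -, hcq⟩ := hgap c hc
      omega
    · obtain ⟨i, hpc, hcq⟩ := hgap c hc
      exact Set.mem_iUnion.2 ⟨i, G.mem_NIn'_of_adj_of_adj hpc hcq ha hb hac hcb⟩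

/-- if a connected convex bipartite graph has a Hamiltonian path then it
satisfies Property B. -/
theorem stmt_6 {n : ℕ} {Y : Type*} [Fintype Y] [DecidableEq Y]
    (G : ConvexBip n Y) (hconn : G.toGraph.Connected)
    (hham : ConvexBip.HasHamPath G.toGraph) :
    G.PropertyB :=
  stmt_6_general G hham
end

section
/- Let G be a monotone convex bipartite graph with parts X = (x_1,...,x_n) and Y, and let y be a neighbor of x_n whose leftmost neighbor index left(y) is maximum among neighbors of x_n. Let z be a pendant (degree-1) vertex of Y adjacent to x_n if one exists. Then the subgraph G' induced on V(G) \ {x_n, y, z} (or V(G) \ {x_n, y} if z does not exist) is again a monotone convex bipartite graph. -/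
open Finset SimpleGraph

/-- The convex bipartite graph obtained from `G` by deleting the last `X`-vertex `x_n`
and a set `D` of `Y`-vertices. -/
def ConvexBip.delete {n : ℕ} {Y : Type*} (G : ConvexBip n Y) (D : Set Y) :
    ConvexBip (n - 1) {w : Y // w ∉ D} where
  adj i w := G.adj (Fin.castLE (Nat.sub_le n 1) i) w.val
  convex := fun y i₁ i₂ i₃ h12 h23 h1 h3 =>
    G.convex y.val _ _ _ (Fin.mk_le_mk.mpr (Fin.le_def.mp h12))
      (Fin.mk_le_mk.mpr (Fin.le_def.mp h23)) h1 h3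

/-!
Indices are 0-based: `x_k` is `⟨k - 1, _⟩ : Fin n`.

Deleting `x_n` only matters for intervals that reach `x_{n-1}`, and every deleted `Y`-vertex is
adjacent to `x_n`; below `x_{n-1}` the sets `N[X_{p..q}]` and `N'[X_{p..q}]` are unchanged. At
`x_{n-1}` the lost vertex `x_n` is paid for by `y₀`: either `y₀` was counted in the old bound, or,
since `left y₀` is maximal among the neighbours of `x_n`, every survivor adjacent to `x_n` is
counted elsewhere anyway. New pendant vertices hang at `x_1` or have their neighbourhood in
`{x_{n-1}, x_n}`, and there is at most one of each kind. Finally, a tight interval strictly inside a monotone graph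
would extend to a maximal one, so there is none, and none can appear after the deletion.
-/

lemma Fin.ncard_preimage_castLE {m n : ℕ} (h : m ≤ n) (S : Set (Fin n)) :
    (Fin.castLE h ⁻¹' S).ncard = {j ∈ S | (j : ℕ) < m}.ncard := by
  rw [← Set.ncard_image_of_injective _ (Fin.castLE_injective h),
    Set.image_preimage_eq_inter_range, Fin.range_castLE]
  rfl

/-- The disjointly interleaved families of intervals `[p i, q i]` of Property B (2). -/
def Interleaved {α : Type*} [Preorder α] {k : ℕ} (p q : Fin k → α) : Prop :=
  (∀ i, p i < q i) ∧ ∀ i i', i < i' → q i ≤ p i'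

namespace Interleaved

variable {α β : Type*} [PartialOrder α] [Preorder β] {k : ℕ} {p q : Fin k → α}

lemma comp (h : Interleaved p q) {f : α → β} (hf : StrictMono f) :
    Interleaved (f ∘ p) (f ∘ q) :=
  ⟨fun i => hf (h.1 i), fun i i' hii' => hf.monotone (h.2 i i' hii')⟩

lemma snoc (h : Interleaved p q) {a b : α} (hqa : ∀ i, q i ≤ a) (hab : a < b) :
    Interleaved (Fin.snoc p a : Fin (k + 1) → α) (Fin.snoc q b) := by
  refine ⟨Fin.lastCases (by simpa) (fun i => by simpa using h.1 i), fun i i' hii' => ?_⟩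
  induction i' using Fin.lastCases with
  | last =>
    induction i using Fin.lastCases with
    | last => exact absurd hii' (lt_irrefl _)
    | cast i => simpa using hqa i
  | cast i' =>
    induction i using Fin.lastCases with
    | last => exact absurd hii' (not_lt.mpr (Fin.le_last _))
    | cast i => simpa using h.2 i i' (by simpa using hii')

end Interleaved

namespace ConvexBip

variable {n : ℕ} {Y : Type*} {G : ConvexBip n Y} {D : Set Y}

/-- `left y ≤ left y₀` in the paper's notation. -/
def LeftLE (G : ConvexBip n Y) (y y₀ : Y) : Prop :=
  ∀ i, G.adj i y₀ → ∃ i', G.adj i' y ∧ i' ≤ i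

lemma degY_eq_one_of_forall_eq {w : Y} {i : Fin n} (hi : G.adj i w)
    (h : ∀ j, G.adj j w → j = i) : G.degY w = 1 :=
  Set.ncard_eq_one.mpr ⟨i, Set.ext fun j => ⟨h j, fun hj => hj ▸ hi⟩⟩

lemma two_le_degY_of_mem_NIn' {w : Y} {a b : Fin n} (hw : w ∈ G.NIn' a b) : 2 ≤ G.degY w :=
  hw.trans (Set.ncard_le_ncard fun _ hj => hj.1)

lemma exists_adj_lt_of_mem_NIn' {w : Y} {a b : Fin n} (hw : w ∈ G.NIn' a b) :
    ∃ i j, G.adj i w ∧ G.adj j w ∧ a ≤ i ∧ i < j ∧ j ≤ b := by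
  obtain ⟨i, hi, j, hj, hij⟩ := (Set.one_lt_ncard (Set.toFinite _)).mp hw
  rcases hij.lt_or_gt with h | h
  · exact ⟨i, j, hi.1, hj.1, hi.2.1, h, hj.2.2⟩
  · exact ⟨j, i, hj.1, hi.1, hj.2.1, h, hi.2.2⟩

lemma mem_NIn_last_iff (hn : 0 < n) {w : Y} {a : Fin n} :
    w ∈ G.NIn a ⟨n - 1, by omega⟩ ↔ ∀ i, G.adj i w → a ≤ i :=
  forall₂_congr fun i _ => and_iff_left (Fin.le_def.mpr (by simp; omega))

lemma LeftLE.mem_NIn_last (hn : 0 < n) {y y₀ : Y} (h : G.LeftLE y y₀) {a : Fin n}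
    (hy : y ∈ G.NIn a ⟨n - 1, by omega⟩) : y₀ ∈ G.NIn a ⟨n - 1, by omega⟩ := by
  rw [mem_NIn_last_iff hn] at hy ⊢
  intro j hj
  obtain ⟨i, hi, hij⟩ := h j hj
  exact (hy i hi).trans hij

/-- By convexity `y` is adjacent to all of `[left y, c]`, and `left y` is at most a neighbour of
`y₀` in `[a, b)`, so `max (left y) a` and `b` are two neighbours of `y` in `[a, b]`. -/
lemma LeftLE.mem_NIn' {y y₀ : Y} (h : G.LeftLE y y₀) {a b c : Fin n} (hc : G.adj c y)
    (hbc : b ≤ c) (hy₀ : y₀ ∈ G.NIn' a b) : y ∈ G.NIn' a b := by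
  obtain ⟨j, j', hj, -, haj, hjj', hj'b⟩ := exists_adj_lt_of_mem_NIn' hy₀
  have hjb := hjj'.trans_le hj'b
  obtain ⟨i, hi, hij⟩ := h j hj
  have hadj : ∀ x, i ≤ x → x ≤ c → G.adj x y := fun x h₁ h₂ => G.convex y i x c h₁ h₂ hi hc
  have hlow : max i a < b := max_lt (hij.trans_lt hjb) (haj.trans_lt hjb)
  have hsub : {max i a, b} ⊆ {x | G.adj x y ∧ a ≤ x ∧ x ≤ b} := by
    rintro x (rfl | rfl)
    · exact ⟨hadj _ (le_max_left _ _) (hlow.le.trans hbc), le_max_right _ _, hlow.le⟩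
    · exact ⟨hadj _ (le_max_left i a |>.trans hlow.le) hbc, (le_max_right i a).trans hlow.le,
        le_rfl⟩
  exact (Set.ncard_pair hlow.ne).symm.le.trans (Set.ncard_le_ncard hsub)

lemma exists_isMaximalInt_of_ncard_NIn_eq {p q : Fin n} (hp : 0 < (p : ℕ)) (hpq : p ≤ q)
    (hq : (q : ℕ) < n - 1) (h : (G.NIn p q).ncard = q - p + 1) :
    ∃ p' q' : Fin n, 0 < (p' : ℕ) ∧ (q' : ℕ) < n - 1 ∧ p' ≤ p ∧ q ≤ q' ∧ G.IsMaximalInt p' q' := by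
  classical
  let S := (Finset.univ : Finset (Fin n × Fin n)).filter fun r =>
    0 < (r.1 : ℕ) ∧ (r.2 : ℕ) < n - 1 ∧ r.1 ≤ p ∧ q ≤ r.2 ∧
      (G.NIn r.1 r.2).ncard = r.2 - r.1 + 1
  obtain ⟨⟨p', q'⟩, hr, hlongest⟩ :=
    S.exists_max_image (fun r => (r.2 : ℕ) - r.1) ⟨(p, q), by simp [S, *]⟩
  obtain ⟨hp', hq', hpp', hqq', hcard⟩ : 0 < (p' : ℕ) ∧ (q' : ℕ) < n - 1 ∧ p' ≤ p ∧ q ≤ q' ∧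
      (G.NIn p' q').ncard = q' - p' + 1 := by simpa [S] using hr
  refine ⟨p', q', hp', hq', hpp', hqq', hcard, ?_⟩
  rintro ⟨p'', q'', hp'', hq'', hpp'', hqq'', hlt, hcard''⟩
  have := hlongest (p'', q'') (by simp [S, *, hpp''.trans hpp', hqq'.trans hqq''])
  simp only [Fin.le_def, Fin.lt_def] at *
  omega

lemma IsMonotone.ncard_NIn_ne (hG : G.IsMonotone) {p q : Fin n} (hp : 0 < (p : ℕ))
    (hpq : p < q) (hq : (q : ℕ) < n - 1) : (G.NIn p q).ncard ≠ q - p + 1 := fun h => by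
  obtain ⟨p', q', hp', hq', hpp', hqq', hM⟩ :=
    exists_isMaximalInt_of_ncard_NIn_eq hp hpq.le hq h
  exact hG.2.2 ⟨p', q', hp', (hpp'.trans_lt hpq).trans_le hqq', hq', hM⟩

/-- Otherwise `w₁`, `w₂` and `y₀` would be three vertices of `N[X_{n-1..n}]`. -/
lemma PropertyB.eq_of_mem_NIn_top [Finite Y] (hB : G.PropertyB) (hn : 3 ≤ n) {y₀ : Y}
    (hmax : ∀ y, G.adj ⟨n - 1, by omega⟩ y → G.LeftLE y y₀) {w₁ w₂ : Y}
    (h₁ : G.adj ⟨n - 1, by omega⟩ w₁) (hw₁ : w₁ ∈ G.NIn ⟨n - 2, by omega⟩ ⟨n - 1, by omega⟩)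
    (hw₂ : w₂ ∈ G.NIn ⟨n - 2, by omega⟩ ⟨n - 1, by omega⟩) (hne₁ : w₁ ≠ y₀) (hne₂ : w₂ ≠ y₀) :
    w₁ = w₂ := by
  by_contra hne
  have hy₀ := (hmax w₁ h₁).mem_NIn_last (by omega) hw₁
  have hthree : ({w₁, w₂, y₀} : Set Y).ncard = 3 :=
    Set.ncard_eq_three.mpr ⟨_, _, _, hne, hne₁, hne₂, rfl⟩
  have hsub : ({w₁, w₂, y₀} : Set Y) ⊆ G.NIn ⟨n - 2, by omega⟩ ⟨n - 1, by omega⟩ := by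
    rintro w (rfl | rfl | rfl) <;> assumption
  have hle := hB.1 ⟨n - 2, by omega⟩ ⟨n - 1, by omega⟩ (Fin.mk_lt_mk.mpr (by omega))
    (Or.inr (Or.inl ⟨by simp only; omega, rfl⟩))
  have := Set.ncard_le_ncard hsub
  simp only at hle
  omega

/-- If `y₀` is counted, the family extended by `[x_{n-1}, x_n]` gains one in the sum, while
by `LeftLE.mem_NIn'` its extra vertices other than `y₀` are already counted. -/
lemma PropertyB.sum_le_ncard_iUnion_NIn'_diff [Finite Y] (hB : G.PropertyB) (hn : 0 < n)
    {y₀ : Y} (hmax : ∀ y, G.adj ⟨n - 1, by omega⟩ y → G.LeftLE y y₀) {k : ℕ}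
    {p q : Fin k → Fin n} (hk : 1 ≤ k) (hkn : k ≤ n - 2) (h : Interleaved p q)
    (hq : ∀ i, (q i : ℕ) < n - 1) :
    ∑ i, ((q i : ℕ) - p i) ≤ ((⋃ i, G.NIn' (p i) (q i)) \ {y₀}).ncard := by
  by_cases hy₀ : y₀ ∈ ⋃ i, G.NIn' (p i) (q i)
  swap
  · rw [Set.sdiff_singleton_eq_self hy₀]
    exact hB.2.2.1 k p q hk (by omega) h.1 h.2
  obtain ⟨j₀, hj₀⟩ := Set.mem_iUnion.mp hy₀
  let p' : Fin (k + 1) → Fin n := Fin.snoc p ⟨n - 2, by omega⟩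
  let q' : Fin (k + 1) → Fin n := Fin.snoc q ⟨n - 1, by omega⟩
  have hext : Interleaved p' q' :=
    h.snoc (fun i => Fin.le_def.mpr (by have := hq i; simp only; omega))
      (Fin.mk_lt_mk.mpr (by omega))
  have hB3 := hB.2.2.1 (k + 1) p' q' (by omega) (by omega) hext.1 hext.2
  have hsum : ∑ i, ((q' i : ℕ) - p' i) = ∑ i, ((q i : ℕ) - p i) + 1 := by
    rw [Fin.sum_univ_castSucc]
    simp only [p', q', Fin.snoc_castSucc, Fin.snoc_last]
    omega
  have hsub : (⋃ i, G.NIn' (p' i) (q' i)) \ {y₀} ⊆ (⋃ i, G.NIn' (p i) (q i)) \ {y₀} := by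
    rintro w ⟨hw, hne⟩
    refine ⟨?_, hne⟩
    obtain ⟨i, hi⟩ := Set.mem_iUnion.mp hw
    induction i using Fin.lastCases with
    | cast i => exact Set.mem_iUnion.mpr ⟨i, by simpa [p', q'] using hi⟩
    | last =>
      simp only [p', q', Fin.snoc_last] at hi
      obtain ⟨c₀, c, -, hc, hc₀, hc₀c, hcn⟩ := exists_adj_lt_of_mem_NIn' hi
      have hcn : c = ⟨n - 1, by omega⟩ := Fin.ext (by
        simp only [Fin.lt_def, Fin.le_def] at hc₀ hc₀c hcn ⊢; omega)
      rw [hcn] at hc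
      exact Set.mem_iUnion.mpr ⟨j₀, (hmax w hc).mem_NIn' hc
        (Fin.le_def.mpr (by have := hq j₀; simp only; omega)) hj₀⟩
  have hy₀' : y₀ ∈ ⋃ i, G.NIn' (p' i) (q' i) :=
    Set.mem_iUnion.mpr ⟨j₀.castSucc, by simpa [p', q'] using hj₀⟩
  have := Set.ncard_sdiff_singleton_add_one hy₀'
  have := Set.ncard_le_ncard hsub
  omega

lemma degY_delete (w : {w // w ∉ D}) :
    (G.delete D).degY w = {j | G.adj j w.1 ∧ (j : ℕ) < n - 1}.ncard :=
  Fin.ncard_preimage_castLE _ {j | G.adj j w.1}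

lemma mem_NIn'_delete_iff {w : {w // w ∉ D}} {p q : Fin (n - 1)} :
    w ∈ (G.delete D).NIn' p q ↔
      w.1 ∈ G.NIn' (Fin.castLE (Nat.sub_le n 1) p) (Fin.castLE (Nat.sub_le n 1) q) := by
  let S := {j | G.adj j w.1 ∧ Fin.castLE (Nat.sub_le n 1) p ≤ j ∧
    j ≤ Fin.castLE (Nat.sub_le n 1) q}
  have hS : {j ∈ S | (j : ℕ) < n - 1} = S :=
    Set.sep_eq_self_iff_mem_true.mpr fun j hj => (Fin.le_def.mp hj.2.2).trans_lt (by simp)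
  change 2 ≤ (Fin.castLE _ ⁻¹' S).ncard ↔ 2 ≤ S.ncard
  rw [Fin.ncard_preimage_castLE, hS]

lemma mem_NIn_delete_iff {w : {w // w ∉ D}} {p q : Fin (n - 1)} :
    w ∈ (G.delete D).NIn p q ↔ ∀ j, G.adj j w.1 → (j : ℕ) < n - 1 →
      Fin.castLE (Nat.sub_le n 1) p ≤ j ∧ j ≤ Fin.castLE (Nat.sub_le n 1) q :=
  ⟨fun h j hj hjn => h ⟨j, hjn⟩ hj, fun h i hi => h _ hi i.isLt⟩

lemma val_mem_NIn_last_of_mem_NIn_delete (hn : 0 < n) {w : {w // w ∉ D}} {p q : Fin (n - 1)}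
    (hw : w ∈ (G.delete D).NIn p q) :
    w.1 ∈ G.NIn (Fin.castLE (Nat.sub_le n 1) p) ⟨n - 1, by omega⟩ := by
  rw [mem_NIn_last_iff hn]
  intro j hj
  rcases Nat.lt_or_ge j (n - 1) with hjn | hjn
  · exact ((mem_NIn_delete_iff.mp hw) j hj hjn).1
  · exact Fin.le_def.mpr (by simp only [Fin.val_castLE]; omega)

lemma val_mem_NIn_of_mem_NIn_delete (hn : 0 < n) {w : {w // w ∉ D}} {p q : Fin (n - 1)}
    (hw : w ∈ (G.delete D).NIn p q) (hwL : ¬ G.adj ⟨n - 1, by omega⟩ w.1) :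
    w.1 ∈ G.NIn (Fin.castLE (Nat.sub_le n 1) p) (Fin.castLE (Nat.sub_le n 1) q) := by
  intro j hj
  refine (mem_NIn_delete_iff.mp hw) j hj ?_
  by_contra hjn
  have hjL : j = ⟨n - 1, by omega⟩ := Fin.ext (by have := j.isLt; simp only; omega)
  exact hwL (hjL ▸ hj)

lemma not_adj_last_of_mem_NIn_delete (hn : 0 < n)
    (hD : ∀ w, G.degY w = 1 → G.adj ⟨n - 1, by omega⟩ w → w ∈ D) {w : {w // w ∉ D}}
    {p q : Fin (n - 1)} (hw : w ∈ (G.delete D).NIn p q) (hq : (q : ℕ) + 1 < n - 1) :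
    ¬ G.adj ⟨n - 1, by omega⟩ w.1 := by
  intro hwL
  by_cases hlow : ∃ j : Fin n, G.adj j w.1 ∧ (j : ℕ) < n - 1
  · obtain ⟨j, hj, hjn⟩ := hlow
    have hjq := Fin.le_def.mp ((mem_NIn_delete_iff.mp hw) j hj hjn).2
    have hnext : G.adj ⟨q + 1, by omega⟩ w.1 :=
      G.convex w.1 j _ _ (Fin.le_def.mpr (by simp at hjq ⊢; omega))
        (Fin.le_def.mpr (by simp only; omega)) hj hwL
    have := Fin.le_def.mp ((mem_NIn_delete_iff.mp hw) _ hnext (by simp only; omega)).2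
    simp at this
  · push Not at hlow
    refine w.2 (hD w.1 (degY_eq_one_of_forall_eq hwL fun j hj => ?_) hwL)
    exact Fin.ext (by have := hlow j hj; simp only; omega)

/-- Everything deleted is adjacent to `x_n`, and a survivor adjacent to `x_n` and to some vertex
of `X_{p..q}` would, by convexity, also be adjacent to `x_{q+1}`. -/
lemma ncard_NIn_delete (hn : 0 < n)
    (hD : ∀ w, G.degY w = 1 → G.adj ⟨n - 1, by omega⟩ w → w ∈ D)
    (hDL : ∀ w ∈ D, G.adj ⟨n - 1, by omega⟩ w) {p q : Fin (n - 1)} (hq : (q : ℕ) + 1 < n - 1) :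
    ((G.delete D).NIn p q).ncard =
      (G.NIn (Fin.castLE (Nat.sub_le n 1) p) (Fin.castLE (Nat.sub_le n 1) q)).ncard := by
  rw [← Set.ncard_image_of_injective _ Subtype.val_injective]
  congr 1
  ext w
  constructor
  · rintro ⟨w, hw, rfl⟩
    exact val_mem_NIn_of_mem_NIn_delete hn hw (not_adj_last_of_mem_NIn_delete hn hD hw hq)
  · intro hw
    have hwL : ¬ G.adj ⟨n - 1, by omega⟩ w := fun h => by
      have := Fin.le_def.mp (hw _ h).2
      simp at this
      omega
    refine ⟨⟨w, fun h => hwL (hDL w h)⟩, mem_NIn_delete_iff.mpr fun j hj _ => hw j hj, rfl⟩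

lemma ncard_delete_le [Finite Y] (hn : 0 < n) (hB : G.PropertyB) {y₀ : Y} (hy₀D : y₀ ∈ D)
    (S : Set {w // w ∉ D}) : S.ncard ≤ n := by
  have hall : ∀ w, w ∈ G.NIn ⟨0, hn⟩ ⟨n - 1, by omega⟩ := fun w =>
    (mem_NIn_last_iff hn).mpr fun i _ => Fin.le_def.mpr (Nat.zero_le _)
  have hsub : Subtype.val '' S ⊆ G.NIn ⟨0, hn⟩ ⟨n - 1, by omega⟩ \ {y₀} := by
    rintro _ ⟨w, -, rfl⟩
    exact ⟨hall w, fun h => w.2 (Set.mem_singleton_iff.mp h ▸ hy₀D)⟩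
  have := Set.ncard_le_ncard hsub
  have := Set.ncard_sdiff_singleton_add_one (hall y₀)
  have := hB.2.1 hn
  rw [Set.ncard_image_of_injective _ Subtype.val_injective] at *
  omega

/-- Either `y₀` has no neighbour left of `x_p`, and deleting it pays for the lost `x_n`, or no
survivor is adjacent to `x_n`, since its left end would not exceed `left y₀`. -/
lemma ncard_NIn_delete_le_of_top [Finite Y] (hn : 0 < n) (hB : G.PropertyB) {y₀ : Y}
    (hmax : ∀ y, G.adj ⟨n - 1, by omega⟩ y → G.LeftLE y y₀) (hy₀D : y₀ ∈ D)
    {p q : Fin (n - 1)} (hp : 0 < (p : ℕ)) (hpq : p < q) (hq : (q : ℕ) = n - 2) :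
    ((G.delete D).NIn p q).ncard ≤ q - p + 1 := by
  have hpq' := Fin.lt_def.mp hpq
  rw [← Set.ncard_image_of_injective _ Subtype.val_injective]
  by_cases hy₀ : y₀ ∈ G.NIn (Fin.castLE (Nat.sub_le n 1) p) ⟨n - 1, by omega⟩
  · have hsub : Subtype.val '' (G.delete D).NIn p q ⊆
        G.NIn (Fin.castLE (Nat.sub_le n 1) p) ⟨n - 1, by omega⟩ \ {y₀} := by
      rintro _ ⟨w, hw, rfl⟩
      exact ⟨val_mem_NIn_last_of_mem_NIn_delete hn hw,
        fun h => w.2 (Set.mem_singleton_iff.mp h ▸ hy₀D)⟩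
    have := Set.ncard_le_ncard hsub
    have := Set.ncard_sdiff_singleton_add_one hy₀
    have := hB.1 (Fin.castLE (Nat.sub_le n 1) p) ⟨n - 1, by omega⟩
      (Fin.lt_def.mpr (by simp)) (Or.inr (Or.inl ⟨by simpa using hp, rfl⟩))
    simp only [Fin.val_castLE] at this
    omega
  · have hsub : Subtype.val '' (G.delete D).NIn p q ⊆
        G.NIn (Fin.castLE (Nat.sub_le n 1) p) (Fin.castLE (Nat.sub_le n 1) q) := by
      rintro _ ⟨w, hw, rfl⟩
      have hwp := val_mem_NIn_last_of_mem_NIn_delete hn hw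
      exact val_mem_NIn_of_mem_NIn_delete hn hw fun hwL => hy₀ ((hmax _ hwL).mem_NIn_last hn hwp)
    have := Set.ncard_le_ncard hsub
    have := hB.1 _ _ ((Fin.castLE_lt_castLE_iff (Nat.sub_le n 1)).mpr hpq)
      (Or.inr (Or.inr ⟨by simpa using hp, by simp⟩))
    simp only [Fin.val_castLE] at this
    omega

lemma ncard_NIn_delete_le [Finite Y] (hn : 0 < n) (hB : G.PropertyB) {y₀ : Y}
    (hmax : ∀ y, G.adj ⟨n - 1, by omega⟩ y → G.LeftLE y y₀) (hy₀D : y₀ ∈ D)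
    (hD : ∀ w, G.degY w = 1 → G.adj ⟨n - 1, by omega⟩ w → w ∈ D)
    (hDL : ∀ w ∈ D, G.adj ⟨n - 1, by omega⟩ w) {p q : Fin (n - 1)} (hpq : p < q)
    (hproper : ((p : ℕ) = 0 ∧ (q : ℕ) < n - 1 - 1) ∨ (0 < (p : ℕ) ∧ (q : ℕ) = n - 1 - 1) ∨
      (0 < (p : ℕ) ∧ (q : ℕ) < n - 1 - 1)) :
    ((G.delete D).NIn p q).ncard ≤ q - p + 1 := by
  rcases Nat.lt_or_ge ((q : ℕ) + 1) (n - 1) with hq | hq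
  · rw [ncard_NIn_delete hn hD hDL hq]
    have := hB.1 _ _ ((Fin.castLE_lt_castLE_iff (Nat.sub_le n 1)).mpr hpq) (by simp; omega)
    simpa using this
  · exact ncard_NIn_delete_le_of_top hn hB hmax hy₀D (by omega) hpq (by omega)

lemma sum_le_ncard_iUnion_NIn'_delete [Finite Y] (hn : 0 < n) (hB : G.PropertyB) {y₀ : Y}
    (hmax : ∀ y, G.adj ⟨n - 1, by omega⟩ y → G.LeftLE y y₀)
    (hDsub : ∀ w ∈ D, w = y₀ ∨ G.degY w = 1) {k : ℕ} {p q : Fin k → Fin (n - 1)}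
    (hk : 1 ≤ k) (hkn : k ≤ n - 1 - 1) (h : Interleaved p q) :
    ∑ i, ((q i : ℕ) - p i) ≤ (⋃ i, (G.delete D).NIn' (p i) (q i)).ncard := by
  have hG := hB.sum_le_ncard_iUnion_NIn'_diff hn hmax hk (by omega)
    (h.comp (Fin.strictMono_castLE (Nat.sub_le n 1))) (fun i => by simp)
  simp only [Function.comp_apply, Fin.val_castLE] at hG
  refine hG.trans ?_
  rw [← Set.ncard_image_of_injective _ Subtype.val_injective]
  refine Set.ncard_le_ncard ?_
  rintro w ⟨hw, hne⟩
  obtain ⟨i, hi⟩ := Set.mem_iUnion.mp hw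
  have hwD : w ∉ D := fun hwD =>
    (hDsub w hwD).elim hne (by have := two_le_degY_of_mem_NIn' hi; omega)
  exact ⟨⟨w, hwD⟩, Set.mem_iUnion.mpr ⟨i, mem_NIn'_delete_iff.mpr hi⟩, rfl⟩

lemma degY_delete_eq_one_cases (hn : 0 < n)
    (hP : ¬ ∃ (y : Y) (k : Fin n), G.degY y = 1 ∧ G.adj k y ∧ 0 < k.val ∧ k.val < n - 1)
    {w : {w // w ∉ D}} (hw : (G.delete D).degY w = 1) {i : Fin (n - 1)}
    (hi : (G.delete D).adj i w) :
    ((i : ℕ) = 0 ∧ G.degY w.1 = 1 ∧ G.adj ⟨0, hn⟩ w.1) ∨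
      ((i : ℕ) = n - 2 ∧ G.adj ⟨n - 1, by omega⟩ w.1 ∧
        w.1 ∈ G.NIn ⟨n - 2, by omega⟩ ⟨n - 1, by omega⟩) := by
  have hin := i.isLt
  obtain ⟨j, hj⟩ := Set.ncard_eq_one.mp (degY_delete w ▸ hw)
  have huniq : ∀ j' : Fin n, G.adj j' w.1 → (j' : ℕ) < n - 1 → (j' : ℕ) = i := fun j' h h' => by
    have h₁ : j' ∈ ({j} : Set (Fin n)) := hj ▸ ⟨h, h'⟩
    have h₂ : Fin.castLE (Nat.sub_le n 1) i ∈ ({j} : Set (Fin n)) := hj ▸ ⟨hi, by simp⟩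
    simpa using congrArg Fin.val (h₁.trans h₂.symm)
  by_cases hwL : G.adj ⟨n - 1, by omega⟩ w.1
  · have hprev : G.adj ⟨n - 2, by omega⟩ w.1 :=
      G.convex w.1 _ _ _ (Fin.le_def.mpr (by simp; omega)) (Fin.le_def.mpr (by simp; omega)) hi hwL
    have hi' : (i : ℕ) = n - 2 := by
      have := huniq _ hprev (by simp only; omega)
      simp only at this
      omega
    refine Or.inr ⟨hi', hwL, fun j' hj' => ?_⟩
    have := j'.isLt
    rcases Nat.lt_or_ge j' (n - 1) with h | h
    · have := huniq j' hj' h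
      exact ⟨Fin.le_def.mpr (by simp only; omega), Fin.le_def.mpr (by simp only; omega)⟩
    · exact ⟨Fin.le_def.mpr (by simp only; omega), Fin.le_def.mpr (by simp only; omega)⟩
  · have hdeg : G.degY w.1 = 1 := degY_eq_one_of_forall_eq hi fun j' hj' => by
      have hj'L : (j' : ℕ) ≠ n - 1 := fun h => hwL ((Fin.ext h : j' = ⟨n - 1, by omega⟩) ▸ hj')
      exact Fin.ext (by simpa using huniq j' hj' (by have := j'.isLt; omega))
    have hi0 : (i : ℕ) = 0 := by
      by_contra h
      exact hP ⟨w.1, _, hdeg, hi, by simp; omega, by simp⟩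
    exact Or.inl ⟨hi0, hdeg, (Fin.ext (by simpa using hi0) : Fin.castLE _ i = ⟨0, hn⟩) ▸ hi⟩

lemma eq_of_degY_delete_eq_one [Finite Y] (hn : 3 ≤ n) (hM : G.IsMonotone) {y₀ : Y}
    (hmax : ∀ y, G.adj ⟨n - 1, by omega⟩ y → G.LeftLE y y₀) (hy₀D : y₀ ∈ D)
    {w₁ w₂ : {w // w ∉ D}} (hw₁ : (G.delete D).degY w₁ = 1) (hw₂ : (G.delete D).degY w₂ = 1)
    {i : Fin (n - 1)} (hi₁ : (G.delete D).adj i w₁) (hi₂ : (G.delete D).adj i w₂) :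
    w₁ = w₂ := by
  have hne : ∀ w : {w // w ∉ D}, w.1 ≠ y₀ := fun w h => w.2 (h ▸ hy₀D)
  rcases degY_delete_eq_one_cases (by omega) hM.2.1 hw₁ hi₁ with
    ⟨h₁, hd₁, ha₁⟩ | ⟨h₁, hL₁, hN₁⟩ <;>
  rcases degY_delete_eq_one_cases (by omega) hM.2.1 hw₂ hi₂ with
    ⟨h₂, hd₂, ha₂⟩ | ⟨h₂, hL₂, hN₂⟩
  · by_contra h
    exact hM.1.2.2.2.2 (by omega) _ _ _ (fun h' => h (Subtype.ext h')) hd₁ hd₂ ha₁ ha₂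
  · omega
  · omega
  · exact Subtype.ext (hM.1.eq_of_mem_NIn_top hn hmax hL₁ hN₁ hN₂ (hne w₁) (hne w₂))

lemma ncard_degY_delete_eq_one_le [Finite Y] (hn : 0 < n) (hM : G.IsMonotone) {y₀ : Y}
    (hmax : ∀ y, G.adj ⟨n - 1, by omega⟩ y → G.LeftLE y y₀) (hy₀D : y₀ ∈ D) :
    {w | (G.delete D).degY w = 1}.ncard ≤ 2 := by
  rcases Nat.lt_or_ge n 3 with hn3 | hn3
  · have := ncard_delete_le hn hM.1 hy₀D {w | (G.delete D).degY w = 1}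
    omega
  let A : Set Y := {w | G.degY w = 1 ∧ G.adj ⟨0, hn⟩ w}
  let B : Set Y := {w | w ∉ D ∧ G.adj ⟨n - 1, by omega⟩ w ∧
    w ∈ G.NIn ⟨n - 2, by omega⟩ ⟨n - 1, by omega⟩}
  have hA : A.ncard ≤ 1 := (Set.ncard_le_one_iff).mpr fun {a b} ha hb => by
    by_contra h
    exact hM.1.2.2.2.2 (by omega) _ _ _ h ha.1 hb.1 ha.2 hb.2
  have hB : B.ncard ≤ 1 := (Set.ncard_le_one_iff).mpr fun {a b} ha hb =>
    hM.1.eq_of_mem_NIn_top hn3 hmax ha.2.1 ha.2.2 hb.2.2 (fun h => ha.1 (h ▸ hy₀D))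
      (fun h => hb.1 (h ▸ hy₀D))
  have hsub : Subtype.val '' {w | (G.delete D).degY w = 1} ⊆ A ∪ B := by
    rintro _ ⟨w, hw, rfl⟩
    obtain ⟨i, hi⟩ := Set.nonempty_of_ncard_ne_zero (by rw [hw]; simp : ((G.delete D).degY w) ≠ 0)
    rcases degY_delete_eq_one_cases hn hM.2.1 hw hi with ⟨-, hd, ha⟩ | ⟨-, hL, hN⟩
    · exact Or.inl ⟨hd, ha⟩
    · exact Or.inr ⟨w.2, hL, hN⟩
  rw [← Set.ncard_image_of_injective _ Subtype.val_injective]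
  have := Set.ncard_le_ncard hsub
  have := Set.ncard_union_le A B
  omega

lemma propertyB_delete [Finite Y] (hn : 0 < n) (hM : G.IsMonotone) {y₀ : Y}
    (hmax : ∀ y, G.adj ⟨n - 1, by omega⟩ y → G.LeftLE y y₀) (hy₀D : y₀ ∈ D)
    (hD : ∀ w, G.degY w = 1 → G.adj ⟨n - 1, by omega⟩ w → w ∈ D)
    (hDL : ∀ w ∈ D, G.adj ⟨n - 1, by omega⟩ w) (hDsub : ∀ w ∈ D, w = y₀ ∨ G.degY w = 1) :
    (G.delete D).PropertyB :=
  ⟨fun _ _ hpq hproper => ncard_NIn_delete_le hn hM.1 hmax hy₀D hD hDL hpq hproper,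
    fun _ => (ncard_delete_le hn hM.1 hy₀D _).trans (by omega),
    fun _ _ _ hk hkn hlt hchain =>
      sum_le_ncard_iUnion_NIn'_delete hn hM.1 hmax hDsub hk hkn ⟨hlt, hchain⟩,
    ncard_degY_delete_eq_one_le hn hM hmax hy₀D,
    fun _ _ _ _ hne hw₁ hw₂ hi₁ hi₂ =>
      hne (eq_of_degY_delete_eq_one (by omega) hM hmax hy₀D hw₁ hw₂ hi₁ hi₂)⟩

end ConvexBip

/-- if `G` is monotone, `y₀` is a neighbor of `x_n` with maximum `left(y₀)`
among neighbors of `x_n`, and we delete `x_n`, `y₀`, and any pendant `Y`-vertex adjacent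
to `x_n`, then the resulting graph is again monotone. -/
theorem stmt_9 {n : ℕ} {Y : Type*} [Fintype Y]
    (G : ConvexBip n Y) (hn : 0 < n)
    (hmono : G.IsMonotone)
    (y₀ : Y) (hy₀ : G.adj ⟨n - 1, by omega⟩ y₀)
    -- `left(y₀)` is maximum among neighbors of `x_n`: every neighbor `y` of `x_n` has
    -- a neighbor with index at most any neighbor index of `y₀`
    (hmax : ∀ y : Y, G.adj ⟨n - 1, by omega⟩ y →
        ∀ i : Fin n, G.adj i y₀ → ∃ i' : Fin n, G.adj i' y ∧ i' ≤ i) :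
    (G.delete {w : Y | w = y₀ ∨ (G.degY w = 1 ∧ G.adj ⟨n - 1, by omega⟩ w)}).IsMonotone := by
  set D := {w : Y | w = y₀ ∨ (G.degY w = 1 ∧ G.adj ⟨n - 1, by omega⟩ w)}
  have hy₀D : y₀ ∈ D := Or.inl rfl
  have hD : ∀ w, G.degY w = 1 → G.adj ⟨n - 1, by omega⟩ w → w ∈ D :=
    fun w h₁ h₂ => Or.inr ⟨h₁, h₂⟩
  have hDL : ∀ w ∈ D, G.adj ⟨n - 1, by omega⟩ w := by
    rintro w (rfl | ⟨-, h⟩)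
    exacts [hy₀, h]
  have hDsub : ∀ w ∈ D, w = y₀ ∨ G.degY w = 1 := fun _ => Or.imp_right And.left
  refine ⟨ConvexBip.propertyB_delete hn hmono hmax hy₀D hD hDL hDsub, ?_, ?_⟩
  · rintro ⟨w, i, hw, hi, hi0, hin⟩
    rcases ConvexBip.degY_delete_eq_one_cases hn hmono.2.1 hw hi with ⟨h, -⟩ | ⟨h, -⟩ <;> omega
  · rintro ⟨p, q, hp, hpq, hq, hcard, -⟩
    refine hmono.ncard_NIn_ne (p := Fin.castLE (Nat.sub_le n 1) p)
      (q := Fin.castLE (Nat.sub_le n 1) q) (by simpa) hpq (by simp) ?_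
    rw [← ConvexBip.ncard_NIn_delete hn hD hDL (by omega)]
    simpa using hcard
end

section
/- In every convex bipartite graph, any cycle of length at least 6 has a chord; consequently, every convex bipartite graph is chordal bipartite. -/
open Finset SimpleGraph

/-!
Let `x₀` be the largest vertex of `X` on the cycle, `y₁, y₂` its two neighbours on the cycle and
`x_a, x_b` the vertices following them away from `x₀`. If `x_a ≤ x_b`, then `x_a ≤ x_b ≤ x₀` and
convexity of `N(y₁) ∋ x_a, x₀` gives the edge `y₁ x_b`; otherwise symmetrically `y₂ x_a` is an edge.
Since the cycle has length at least `5`, `x_b` is neither `x₀` nor `x_a`, the only cycle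
neighbours of `y₁`, so this edge is a chord.
-/

namespace SimpleGraph.Walk.IsCycle

variable {V : Type*} {G : SimpleGraph V} {u : V} {c : G.Walk u u}

lemma snd_getVert_length_sub_two_notMem_edges (hc : c.IsCycle) (h5 : 5 ≤ c.length) :
    s(c.snd, c.getVert (c.length - 2)) ∉ c.edges := by
  intro h
  have hnbr : c.getVert (c.length - 2) ∈ c.toSubgraph.neighborSet (c.getVert 1) :=
    adj_toSubgraph_iff_mem_edges.mpr h
  rw [hc.neighborSet_toSubgraph_internal one_ne_zero (by omega)] at hnbr
  rcases hnbr with h0 | h2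
  · have := (hc.getVert_endpoint_iff (i := c.length - 2) (by omega)).mp (by simpa using h0)
    omega
  · have := hc.getVert_injOn ⟨by omega, by omega⟩ ⟨by omega, by omega⟩ h2
    omega

lemma penultimate_getVert_two_notMem_edges (hc : c.IsCycle) (h5 : 5 ≤ c.length) :
    s(c.penultimate, c.getVert 2) ∉ c.edges := by
  have := hc.reverse.snd_getVert_length_sub_two_notMem_edges (by simpa using h5)
  simpa [getVert_reverse, edges_reverse, show c.length - (c.length - 2) = 2 by omega] using this

end SimpleGraph.Walk.IsCycle

namespace ConvexBip

variable {n : ℕ} {Y : Type*} (G : ConvexBip n Y)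

lemma toGraph_adj_inl_iff {i : Fin n} {w : Fin n ⊕ Y} :
    G.toGraph.Adj (.inl i) w ↔ ∃ y, w = .inr y ∧ G.adj i y := by
  simp [toGraph]

lemma toGraph_adj_inr_iff {y : Y} {w : Fin n ⊕ Y} :
    G.toGraph.Adj (.inr y) w ↔ ∃ i, w = .inl i ∧ G.adj i y := by
  simp [toGraph]

lemma exists_max_inl_mem_support {v : Fin n ⊕ Y} (c : G.toGraph.Walk v v) (hc : ¬ c.Nil) :
    ∃ x₀, Sum.inl x₀ ∈ c.support ∧ ∀ x, Sum.inl x ∈ c.support → x ≤ x₀ := by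
  have hne : {x | Sum.inl x ∈ c.support}.Nonempty := by
    cases v with
    | inl x => exact ⟨x, c.start_mem_support⟩
    | inr y =>
      obtain ⟨x, hx, -⟩ := G.toGraph_adj_inr_iff.1 (c.adj_snd hc)
      exact ⟨x, show Sum.inl x ∈ c.support from hx ▸ c.getVert_mem_support 1⟩
  simpa using Set.exists_max_image _ id (Set.toFinite _) hne

theorem exists_chord_of_forall_le {x₀ : Fin n} {c : G.toGraph.Walk (.inl x₀) (.inl x₀)}
    (hc : c.IsCycle) (h5 : 5 ≤ c.length) (hmax : ∀ x, Sum.inl x ∈ c.support → x ≤ x₀) :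
    ∃ u w, G.toGraph.Adj u w ∧ u ∈ c.support ∧ w ∈ c.support ∧ s(u, w) ∉ c.edges := by
  have hnil := hc.not_nil
  obtain ⟨y₁, hy₁, hx₀y₁⟩ := G.toGraph_adj_inl_iff.1 (c.adj_snd hnil)
  obtain ⟨y₂, hy₂, hx₀y₂⟩ := G.toGraph_adj_inl_iff.1 (c.adj_penultimate hnil).symm
  have hy₁xa : G.toGraph.Adj c.snd (c.getVert 2) := c.adj_getVert_succ (i := 1) (by omega)
  have hy₂xb : G.toGraph.Adj c.penultimate (c.getVert (c.length - 2)) := by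
    have := c.adj_getVert_succ (i := c.length - 2) (by omega)
    rwa [show c.length - 2 + 1 = c.length - 1 by omega, G.toGraph.adj_comm] at this
  rw [hy₁] at hy₁xa
  rw [hy₂] at hy₂xb
  obtain ⟨xa, hxa, hxay₁⟩ := G.toGraph_adj_inr_iff.1 hy₁xa
  obtain ⟨xb, hxb, hxby₂⟩ := G.toGraph_adj_inr_iff.1 hy₂xb
  rcases le_total xa xb with hab | hba
  · refine ⟨c.snd, c.getVert (c.length - 2), ?_, c.getVert_mem_support _,
      c.getVert_mem_support _, hc.snd_getVert_length_sub_two_notMem_edges h5⟩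
    have hxb₀ : xb ≤ x₀ := hmax xb (hxb ▸ c.getVert_mem_support _)
    rw [hy₁, hxb]
    exact G.toGraph_adj_inr_iff.2 ⟨xb, rfl, G.convex y₁ xa xb x₀ hab hxb₀ hxay₁ hx₀y₁⟩
  · refine ⟨c.penultimate, c.getVert 2, ?_, c.getVert_mem_support _,
      c.getVert_mem_support _, hc.penultimate_getVert_two_notMem_edges h5⟩
    have hxa₀ : xa ≤ x₀ := hmax xa (hxa ▸ c.getVert_mem_support _)
    rw [hy₂, hxa]
    exact G.toGraph_adj_inr_iff.2 ⟨xa, rfl, G.convex y₂ xb xa x₀ hba hxa₀ hxby₂ hx₀y₂⟩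

end ConvexBip

theorem stmt_13_general {n : ℕ} {Y : Type*}
    (G : ConvexBip n Y) (v : Fin n ⊕ Y) (c : G.toGraph.Walk v v)
    (hc : c.IsCycle) (hlen : 6 ≤ c.length) :
    ∃ u w : Fin n ⊕ Y, G.toGraph.Adj u w ∧ u ∈ c.support ∧ w ∈ c.support ∧
      s(u, w) ∉ c.edges := by
  classical
  obtain ⟨x₀, hx₀, hmax⟩ := G.exists_max_inl_mem_support c hc.not_nil
  obtain ⟨u, w, huw, hu, hw, hchord⟩ := G.exists_chord_of_forall_le (hc.rotate hx₀)
    (by rw [Walk.length_rotate]; omega)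
    (fun x hx => hmax x ((c.mem_support_rotate_iff _ hx₀).1 hx))
  exact ⟨u, w, huw, (c.mem_support_rotate_iff _ hx₀).1 hu, (c.mem_support_rotate_iff _ hx₀).1 hw,
    fun h => hchord ((c.rotate_edges _ hx₀).mem_iff.2 h)⟩

/-- in a convex bipartite graph, every cycle of length at least 6 has a
chord (an edge of the graph between two vertices of the cycle that is not a cycle edge);
hence convex bipartite graphs are chordal bipartite. -/
theorem stmt_13 {n : ℕ} {Y : Type*} [Fintype Y] [DecidableEq Y]
    (G : ConvexBip n Y) (v : Fin n ⊕ Y) (c : G.toGraph.Walk v v)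
    (hc : c.IsCycle) (hlen : 6 ≤ c.length) :
    ∃ u w : Fin n ⊕ Y, G.toGraph.Adj u w ∧ u ∈ c.support ∧ w ∈ c.support ∧
      s(u, w) ∉ c.edges :=
  stmt_13_general G v c hc hlen
end
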